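/- Let t < k be positive integers, 2 ≤ v_1 ≤ ⋯ ≤ v_k, and let d < v_1 be a nonnegative integer. Suppose there exists a super-simple MCA_{d+1}(N; t, k, (v_1,…,v_k)) of optimum size N = (d+1)·∏_{i=k−t+1}^k v_i, and suppose an orthogonal array OA(t+1, k+1, m) exists for some integer m ≥ 2. Then for every integer λ with 2 ≤ λ ≤ m there exists a (λ(d+1)−1, t)-DTA(λ·m^t·N; k, (mv_1, mv_2,…, mv_k)) of optimum size λ·m^t·N meeting the lower bound (λ(d+1))·∏_{i=k−t+1}^k (m v_i). -/

import Mathlib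

/-- An array `A` (rows indexed by `R`, columns by `J`) is of type `v` if every
entry in column `j` lies in `Z_{v j} = {0, 1, …, v j - 1}`. -/
def IsArray {R J : Type*} (v : J → ℕ) (A : R → J → ℕ) : Prop :=
  ∀ r j, A r j < v j

/-- An `s`-way interaction: a set of `s` pairs `(j, σ)` with pairwise distinct
column indices `j` and value `σ ∈ Z_{v j}`. -/
def IsInteraction {J : Type*} [DecidableEq J] (v : J → ℕ) (s : ℕ)
    (T : Finset (J × ℕ)) : Prop :=
  T.card = s ∧ (T.image Prod.fst).card = s ∧ ∀ p ∈ T, p.2 < v p.1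

/-- `rho A T`: the set of rows of `A` in which the interaction `T` is covered. -/
def rho {R J : Type*} [Fintype R] (A : R → J → ℕ) (T : Finset (J × ℕ)) :
    Finset R :=
  Finset.univ.filter fun r => ∀ p ∈ T, A r p.1 = p.2

/-- `rhoSet A 𝒯 = ⋃_{T ∈ 𝒯} rho A T`. -/
def rhoSet {R J : Type*} [Fintype R] [DecidableEq R] (A : R → J → ℕ)
    (Ts : Finset (Finset (J × ℕ))) : Finset R :=
  Ts.sup (rho A)

/-- A `(d,t)`-detecting array of type `v`: for every `t`-way interaction `T` and
every set `𝒯` of exactly `d` `t`-way interactions,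
`ρ(A,T) ⊆ ρ(A,𝒯) ↔ T ∈ 𝒯`. -/
def IsDTA {R J : Type*} [Fintype R] [DecidableEq R] [DecidableEq J] (v : J → ℕ) (d t : ℕ)
    (A : R → J → ℕ) : Prop :=
  IsArray v A ∧
    ∀ T : Finset (J × ℕ), IsInteraction v t T →
      ∀ Ts : Finset (Finset (J × ℕ)), Ts.card = d →
        (∀ T' ∈ Ts, IsInteraction v t T') →
          (rho A T ⊆ rhoSet A Ts ↔ T ∈ Ts)

/-- A mixed covering array `MCA_λ(N; t, k, v)`: an array of type `v` such that
`|ρ(A,T)| ≥ λ` for every `t`-way interaction `T`. -/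
def IsMCA {R J : Type*} [Fintype R] [DecidableEq J] (v : J → ℕ) (lam t : ℕ)
    (A : R → J → ℕ) : Prop :=
  IsArray v A ∧ ∀ T : Finset (J × ℕ), IsInteraction v t T → lam ≤ (rho A T).card

/-- Super-simple of strength `t`: every `(t+1)`-way interaction is covered by at
most one row. -/
def IsSuperSimple {R J : Type*} [Fintype R] [DecidableEq J] (v : J → ℕ) (t : ℕ)
    (A : R → J → ℕ) : Prop :=
  ∀ T : Finset (J × ℕ), IsInteraction v (t + 1) T → (rho A T).card ≤ 1

/-- An orthogonal array `OA_λ(t, k, v)`: all entries in `Z_v` and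
`|ρ(A,T)| = λ` for every `t`-way interaction `T`. (The size requirement
`N = λ·v^t` is imposed on the row-index type in the statements.) -/
def IsOA {R J : Type*} [Fintype R] [DecidableEq J] (vlev lam t : ℕ)
    (A : R → J → ℕ) : Prop :=
  IsArray (fun _ : J => vlev) A ∧
    ∀ T : Finset (J × ℕ), IsInteraction (fun _ : J => vlev) t T →
      (rho A T).card = lam

/-- `Te` is an extension of the interaction `T`: it is obtained from `T` by
adjoining one pair `(j, σ)` with `σ ∈ Z_{v j}` whose column index `j` occurs in
no pair of `T`. -/
def IsExtension {J : Type*} [DecidableEq J] (v : J → ℕ)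
    (T Te : Finset (J × ℕ)) : Prop :=
  ∃ p : J × ℕ, p.2 < v p.1 ∧ (∀ q ∈ T, q.1 ≠ p.1) ∧ Te = insert p T

/-- `A` is `d`-extendible (with respect to strength `t`): for every `t`-way
interaction `T` and every list of `d` extensions `T_1, …, T_d` of `T`
(repetitions allowed), `ρ(A,T) \ (ρ(A,T_1) ∪ ⋯ ∪ ρ(A,T_d))` is nonempty. -/
def IsExtendible {R J : Type*} [Fintype R] [DecidableEq J] (v : J → ℕ)
    (d t : ℕ) (A : R → J → ℕ) : Prop :=
  ∀ T : Finset (J × ℕ), IsInteraction v t T →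
    ∀ Te : Fin d → Finset (J × ℕ), (∀ i, IsExtension v T (Te i)) →
      ∃ r ∈ rho A T, ∀ i, r ∉ rho A (Te i)

/-!
Delete the last column of an `OA(t+1, k+1, m)` after keeping only the `λ·m^t` rows whose last
entry is below `λ`: every `t`-way interaction is then covered exactly `λ` times and every
`(t+1)`-way one at most once, i.e. the result is a super-simple `MCA_λ`. Combining it
columnwise with the super-simple `MCA_{d+1}` via `(a, b) ↦ v_j a + b` multiplies the covering
numbers, giving a super-simple `MCA_{λ(d+1)}` with levels `m v_j`. In a super-simple array two
distinct `t`-way interactions share at most one row, so a `t`-way interaction covered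
`λ(d+1)` times is never covered by `λ(d+1) - 1` others: the array is detecting.
-/

open Finset

@[simp]
lemma mem_rho {R J : Type*} [Fintype R] {A : R → J → ℕ} {T : Finset (J × ℕ)} {r : R} :
    r ∈ rho A T ↔ ∀ p ∈ T, A r p.1 = p.2 := by
  simp [rho]

@[simp]
lemma rho_empty {R J : Type*} [Fintype R] (A : R → J → ℕ) : rho A ∅ = univ := by
  ext; simp

section Interactions

variable {J : Type*} [DecidableEq J]

lemma isInteraction_empty (v : J → ℕ) : IsInteraction v 0 ∅ :=
  ⟨rfl, rfl, by simp⟩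

lemma IsInteraction.insert_of_fst_notMem {v : J → ℕ} {s : ℕ} {T : Finset (J × ℕ)}
    (hT : IsInteraction v s T) {j : J} (hj : j ∉ T.image Prod.fst) {σ : ℕ} (hσ : σ < v j) :
    IsInteraction v (s + 1) (insert (j, σ) T) := by
  have hjT : (j, σ) ∉ T := fun h => hj (mem_image_of_mem _ h)
  refine ⟨by rw [card_insert_of_notMem hjT, hT.1],
    by rw [image_insert, card_insert_of_notMem hj, hT.2.1], fun p hp => ?_⟩
  rcases mem_insert.mp hp with rfl | hp
  exacts [hσ, hT.2.2 p hp]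

lemma IsInteraction.image {J' : Type*} [DecidableEq J'] {v : J → ℕ} {v' : J' → ℕ} {s : ℕ}
    {T : Finset (J × ℕ)} (hT : IsInteraction v s T) {f : J × ℕ → J' × ℕ} {g : J → J'}
    (hg : Function.Injective g) (hfg : ∀ p, (f p).1 = g p.1)
    (hf : ∀ p ∈ T, (f p).2 < v' (f p).1) :
    IsInteraction v' s (T.image f) := by
  have hfst : Set.InjOn Prod.fst (T : Set (J × ℕ)) := by
    rw [← card_image_iff, hT.2.1, hT.1]
  have himage : (T.image f).image Prod.fst = (T.image Prod.fst).image g := by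
    simp only [image_image, Function.comp_def, hfg]
  have hinj : Set.InjOn f (T : Set (J × ℕ)) := fun p hp q hq hpq =>
    hfst hp hq (hg (by rw [← hfg, ← hfg, hpq]))
  refine ⟨by rw [card_image_of_injOn hinj, hT.1],
    by rw [himage, card_image_of_injective _ hg, hT.2.1], ?_⟩
  simp only [mem_image, forall_exists_index, and_imp, forall_apply_eq_imp_iff₂]
  exact hf

end Interactions

section Rows

variable {R J : Type*} [Fintype R]

lemma card_rho_comp_equiv {R' : Type*} [Fintype R'] (e : R' ≃ R) (A : R → J → ℕ)
    (T : Finset (J × ℕ)) : (rho (fun r => A (e r)) T).card = (rho A T).card :=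
  card_equiv e fun r => by simp

variable [DecidableEq J]

lemma IsMCA.comp_equiv {R' : Type*} [Fintype R'] {v : J → ℕ} {μ t : ℕ} {A : R → J → ℕ}
    (hA : IsMCA v μ t A) (e : R' ≃ R) : IsMCA v μ t fun r => A (e r) :=
  ⟨fun r => hA.1 (e r), fun T hT => (card_rho_comp_equiv e A T).symm ▸ hA.2 T hT⟩

lemma IsSuperSimple.comp_equiv {R' : Type*} [Fintype R'] {v : J → ℕ} {t : ℕ} {A : R → J → ℕ}
    (hA : IsSuperSimple v t A) (e : R' ≃ R) : IsSuperSimple v t fun r => A (e r) :=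
  fun T hT => (card_rho_comp_equiv e A T).symm ▸ hA T hT

variable [DecidableEq R]

lemma card_filter_rho_lt (D : R → J → ℕ) (T : Finset (J × ℕ)) (j : J) (c : ℕ) :
    ((rho D T).filter fun x => D x j < c).card =
      ∑ σ ∈ range c, (rho D (insert (j, σ) T)).card := by
  have hsplit : (rho D T).filter (fun x => D x j < c) =
      (range c).biUnion fun σ => rho D (insert (j, σ) T) := by
    ext x
    simp only [mem_filter, mem_rho, mem_biUnion, mem_range, mem_insert, forall_eq_or_imp]
    exact ⟨fun h => ⟨_, h.2, rfl, h.1⟩, fun ⟨σ, hσ, hx, h⟩ => ⟨h, hx ▸ hσ⟩⟩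
  rw [hsplit, card_biUnion]
  intro σ _ τ _ hστ
  refine disjoint_left.mpr fun x hσ hτ => hστ ?_
  exact ((mem_rho.mp hσ) (j, σ) (mem_insert_self _ _)).symm.trans
    ((mem_rho.mp hτ) (j, τ) (mem_insert_self _ _))

lemma IsOA.card_rho [Fintype J] {m μ w : ℕ} {D : R → J → ℕ} (hD : IsOA m μ w D)
    (hw : w ≤ Fintype.card J) {s : ℕ} {T : Finset (J × ℕ)}
    (hT : IsInteraction (fun _ => m) s T) (hs : s ≤ w) :
    (rho D T).card = μ * m ^ (w - s) := by
  suffices key : ∀ c s (T : Finset (J × ℕ)), s + c = w →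
      IsInteraction (fun _ => m) s T → (rho D T).card = μ * m ^ c from
    key _ s T (Nat.add_sub_cancel' hs) hT
  intro c
  induction c with
  | zero => rintro s T rfl hT; simpa using hD.2 T hT
  | succ c ih =>
    intro s T hsc hT
    obtain ⟨j, hj⟩ : ∃ j, j ∉ T.image Prod.fst := by
      by_contra! h
      have := card_le_card fun j (_ : j ∈ univ) => h j
      rw [card_univ, hT.2.1] at this
      omega
    have hall : (rho D T).filter (fun x => D x j < m) = rho D T :=
      filter_true_of_mem fun x _ => hD.1 x j
    rw [← hall, card_filter_rho_lt, sum_congr rfl fun σ hσ =>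
      ih (s + 1) _ (by omega) (hT.insert_of_fst_notMem hj (mem_range.mp hσ))]
    simp only [sum_const, card_range, smul_eq_mul]
    ring

lemma IsSuperSimple.card_rho_inter_le_one {v : J → ℕ} {t : ℕ} {A : R → J → ℕ}
    (hA : IsSuperSimple v t A) {T T' : Finset (J × ℕ)} (hT : IsInteraction v t T)
    (hT' : IsInteraction v t T') (hne : T ≠ T') : (rho A T ∩ rho A T').card ≤ 1 := by
  obtain h | ⟨r₀, hr₀⟩ := (rho A T ∩ rho A T').eq_empty_or_nonempty
  · simp [h]
  obtain ⟨p, hpT', hpT⟩ : ∃ p ∈ T', p ∉ T := not_subset.mp fun h =>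
    hne (eq_of_subset_of_card_le h (hT.1.trans hT'.1.symm).le).symm
  -- a common row forbids `T` and `T'` from giving one column different values
  have hp : p.1 ∉ T.image Prod.fst := by
    simp only [mem_inter, mem_rho] at hr₀
    intro hq
    obtain ⟨q, hq, hqp⟩ := mem_image.mp hq
    have : q = p := Prod.ext hqp (by rw [← hr₀.1 q hq, ← hr₀.2 p hpT', hqp])
    exact hpT (this ▸ hq)
  calc (rho A T ∩ rho A T').card ≤ (rho A (insert p T)).card := by
        refine card_le_card fun r hr => ?_
        simp only [mem_inter, mem_rho, mem_insert, forall_eq_or_imp] at hr ⊢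
        exact ⟨hr.2 p hpT', hr.1⟩
    _ ≤ 1 := hA _ (hT.insert_of_fst_notMem hp (hT'.2.2 p hpT'))

theorem IsMCA.isDTA_of_isSuperSimple {v : J → ℕ} {μ t : ℕ} {A : R → J → ℕ} (hμ : 0 < μ)
    (hA : IsMCA v μ t A) (hS : IsSuperSimple v t A) : IsDTA v (μ - 1) t A := by
  refine ⟨hA.1, fun T hT Ts hcard hTs =>
    ⟨fun hsub => ?_, fun hT r hr => mem_sup.mpr ⟨T, hT, hr⟩⟩⟩
  by_contra hTnot
  have hcover : rho A T ⊆ Ts.biUnion fun T' => rho A T ∩ rho A T' := fun r hr => by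
    obtain ⟨T', hT', hr'⟩ := mem_sup.mp (hsub hr)
    exact mem_biUnion.mpr ⟨T', hT', mem_inter.mpr ⟨hr, hr'⟩⟩
  have hle : (rho A T).card ≤ Ts.card := calc
    (rho A T).card ≤ ∑ T' ∈ Ts, (rho A T ∩ rho A T').card :=
      (card_le_card hcover).trans card_biUnion_le
    _ ≤ ∑ _T' ∈ Ts, 1 := sum_le_sum fun T' hT' =>
      hS.card_rho_inter_le_one hT (hTs T' hT') fun h => hTnot (h ▸ hT')
    _ = Ts.card := by simp
  have := hA.2 T hT
  omega

end Rows

section DropLastColumn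

variable {R : Type*} [Fintype R] {k m : ℕ}

def dropLastColumn (D : R → Fin (k + 1) → ℕ) (c : ℕ) :
    {x // D x (Fin.last k) < c} → Fin k → ℕ :=
  fun x j => D x j.castSucc

lemma card_rho_dropLastColumn (D : R → Fin (k + 1) → ℕ) (c : ℕ) (T : Finset (Fin k × ℕ)) :
    (rho (dropLastColumn D c) T).card =
      ((rho D (T.image fun p => (p.1.castSucc, p.2))).filter
        fun x => D x (Fin.last k) < c).card := by
  rw [← card_subtype]
  congr 1
  ext x
  simp only [mem_rho, mem_subtype, forall_mem_image, dropLastColumn]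

lemma IsInteraction.insert_last_image_castSucc {s : ℕ} {T : Finset (Fin k × ℕ)}
    (hT : IsInteraction (fun _ => m) s T) {σ : ℕ} (hσ : σ < m) :
    IsInteraction (fun _ => m) (s + 1)
      (insert (Fin.last k, σ) (T.image fun p => (p.1.castSucc, p.2))) :=
  (hT.image (Fin.castSucc_injective k) (fun _ => rfl) fun p hp => hT.2.2 p hp)
    |>.insert_of_fst_notMem (by simp) hσ

variable {t : ℕ} {D : R → Fin (k + 1) → ℕ}

lemma IsOA.isSuperSimple_dropLastColumn (hD : IsOA m 1 (t + 1) D) (c : ℕ) :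
    IsSuperSimple (fun _ => m) t (dropLastColumn D c) := fun T hT => by
  rw [card_rho_dropLastColumn]
  exact (card_filter_le _ _).trans
    (hD.2 _ (hT.image (Fin.castSucc_injective k) (fun _ => rfl) fun p hp => hT.2.2 p hp)).le

variable [DecidableEq R]

lemma IsOA.card_dropLastColumn (hD : IsOA m 1 (t + 1) D) {c : ℕ} (hc : c ≤ m) (htk : t ≤ k) :
    Fintype.card {x // D x (Fin.last k) < c} = c * m ^ t := by
  rw [Fintype.card_subtype, ← rho_empty D, card_filter_rho_lt,
    sum_congr rfl fun σ hσ => hD.card_rho (by simpa using htk)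
      ((isInteraction_empty _).insert_of_fst_notMem (by simp) ((mem_range.mp hσ).trans_le hc))
      (by omega)]
  simp

lemma IsOA.isMCA_dropLastColumn (hD : IsOA m 1 (t + 1) D) {c : ℕ} (hc : c ≤ m) :
    IsMCA (fun _ => m) c t (dropLastColumn D c) := by
  refine ⟨fun x j => hD.1 x j.castSucc, fun T hT => ?_⟩
  rw [card_rho_dropLastColumn, card_filter_rho_lt, sum_congr rfl fun σ hσ =>
    hD.2 _ (hT.insert_last_image_castSucc ((mem_range.mp hσ).trans_le hc))]
  simp

end DropLastColumn

section ProdArray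

variable {R₁ R₂ J : Type*} {v w : J → ℕ}

def prodArray (v : J → ℕ) (D : R₁ → J → ℕ) (A : R₂ → J → ℕ) : R₁ × R₂ → J → ℕ :=
  fun r j => v j * D r.1 j + A r.2 j

lemma IsArray.prodArray {D : R₁ → J → ℕ} {A : R₂ → J → ℕ} (hD : IsArray w D)
    (hA : IsArray v A) : IsArray (fun j => w j * v j) (prodArray v D A) := fun r j =>
  calc v j * D r.1 j + A r.2 j < v j * (D r.1 j + 1) := by
        rw [Nat.mul_succ]; exact Nat.add_lt_add_left (hA r.2 j) _
    _ ≤ v j * w j := Nat.mul_le_mul_left _ (hD r.1 j)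
    _ = w j * v j := Nat.mul_comm _ _

variable [Fintype R₁] [Fintype R₂] [DecidableEq J]

lemma card_rho_prodArray (hv : ∀ j, 0 < v j) {D : R₁ → J → ℕ} {A : R₂ → J → ℕ}
    (hA : IsArray v A) (T : Finset (J × ℕ)) :
    (rho (prodArray v D A) T).card =
      (rho D (T.image fun p => (p.1, p.2 / v p.1))).card *
        (rho A (T.image fun p => (p.1, p.2 % v p.1))).card := by
  rw [← card_product]
  congr 1
  ext ⟨x, y⟩
  simp only [mem_rho, mem_product, forall_mem_image, ← forall₂_and, prodArray]
  refine forall₂_congr fun p _ => ?_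
  rw [eq_comm (a := D x p.1), eq_comm (a := A y p.1), Nat.div_mod_unique (hv p.1), add_comm]
  exact (and_iff_left (hA y p.1)).symm

lemma IsInteraction.image_div (hv : ∀ j, 0 < v j) {s : ℕ} {T : Finset (J × ℕ)}
    (hT : IsInteraction (fun j => w j * v j) s T) :
    IsInteraction w s (T.image fun p => (p.1, p.2 / v p.1)) :=
  hT.image Function.injective_id (fun _ => rfl) fun p hp =>
    (Nat.div_lt_iff_lt_mul (hv p.1)).mpr (hT.2.2 p hp)

lemma IsInteraction.image_mod (hv : ∀ j, 0 < v j) {s : ℕ} {T : Finset (J × ℕ)}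
    (hT : IsInteraction (fun j => w j * v j) s T) :
    IsInteraction v s (T.image fun p => (p.1, p.2 % v p.1)) :=
  hT.image Function.injective_id (fun _ => rfl) fun p _ => Nat.mod_lt _ (hv p.1)

lemma IsMCA.prodArray (hv : ∀ j, 0 < v j) {μ ν t : ℕ} {D : R₁ → J → ℕ} {A : R₂ → J → ℕ}
    (hD : IsMCA w μ t D) (hA : IsMCA v ν t A) :
    IsMCA (fun j => w j * v j) (μ * ν) t (prodArray v D A) :=
  ⟨hD.1.prodArray hA.1, fun T hT => by
    rw [card_rho_prodArray hv hA.1]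
    exact Nat.mul_le_mul (hD.2 _ (hT.image_div hv)) (hA.2 _ (hT.image_mod hv))⟩

lemma IsSuperSimple.prodArray (hv : ∀ j, 0 < v j) {t : ℕ} {D : R₁ → J → ℕ} {A : R₂ → J → ℕ}
    (hA' : IsArray v A) (hD : IsSuperSimple w t D) (hA : IsSuperSimple v t A) :
    IsSuperSimple (fun j => w j * v j) t (prodArray v D A) := fun T hT => by
  rw [card_rho_prodArray hv hA']
  exact mul_le_one' (hD _ (hT.image_div hv)) (hA _ (hT.image_mod hv))

end ProdArray

theorem stmt_13_general {t k d N m : ℕ} (hk : 0 < k) (htk : t < k)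
    (v : Fin k → ℕ) (hmono : Monotone v) (hv2 : 2 ≤ v ⟨0, hk⟩)
    (hMCA : ∃ A : Fin N → Fin k → ℕ, IsMCA v (d + 1) t A ∧ IsSuperSimple v t A)
    (hOA : ∃ D : Fin (m ^ (t + 1)) → Fin (k + 1) → ℕ, IsOA m 1 (t + 1) D) :
    ∀ lam : ℕ, 2 ≤ lam → lam ≤ m →
      ∃ C : Fin (lam * m ^ t * N) → Fin k → ℕ,
        IsDTA (fun j => m * v j) (lam * (d + 1) - 1) t C := by
  obtain ⟨A, hA, hAss⟩ := hMCA
  obtain ⟨D, hD⟩ := hOA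
  intro lam hlam hlm
  have hv : ∀ j, 0 < v j := fun j => by
    have : v ⟨0, hk⟩ ≤ v j := hmono (Nat.zero_le j.1)
    omega
  have hC := (hD.isMCA_dropLastColumn hlm).prodArray hv hA
  have hCss := (hD.isSuperSimple_dropLastColumn lam).prodArray hv hA.1 hAss
  let e : Fin (lam * m ^ t * N) ≃ {x // D x (Fin.last k) < lam} × Fin N :=
    Fintype.equivOfCardEq (by simp [hD.card_dropLastColumn hlm htk.le])
  exact ⟨_, (hC.comp_equiv e).isDTA_of_isSuperSimple (Nat.mul_pos (by omega) d.succ_pos)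
    (hCss.comp_equiv e)⟩

/-- STATEMENT 13 (Corollary: from a super-simple `MCA_{d+1}` of optimum size
`N = (d+1)·∏_{i=k-t+1}^k v_i` and an `OA(t+1, k+1, m)`, for every
`2 ≤ λ ≤ m` there is a `(λ(d+1)-1, t)`-DTA of optimum size `λ·m^t·N` on levels
`(m v_1, …, m v_k)` meeting the lower bound). -/
theorem stmt_13 {t k d N m : ℕ} (ht : 0 < t) (hk : 0 < k) (htk : t < k)
    (v : Fin k → ℕ) (hmono : Monotone v) (hv2 : 2 ≤ v ⟨0, hk⟩)
    (hdv : d < v ⟨0, hk⟩) (hm : 2 ≤ m)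
    (hN : N = (d + 1) * ∏ i ∈ Finset.univ.filter (fun i : Fin k => k - t ≤ (i : ℕ)), v i)
    (hMCA : ∃ A : Fin N → Fin k → ℕ, IsMCA v (d + 1) t A ∧ IsSuperSimple v t A)
    (hOA : ∃ D : Fin (m ^ (t + 1)) → Fin (k + 1) → ℕ, IsOA m 1 (t + 1) D) :
    ∀ lam : ℕ, 2 ≤ lam → lam ≤ m →
      ∃ C : Fin (lam * m ^ t * N) → Fin k → ℕ,
        IsDTA (fun j => m * v j) (lam * (d + 1) - 1) t C :=
  stmt_13_general hk htk v hmono hv2 hMCA hOA
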